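/- Let d ∈ ℕ and 1 < q < ∞. For every Schwartz function u : ℝ^d → ℂ one has ‖⟨D⟩^{d/2 − d/q}u‖_2² ≤ ‖⟨D⟩^{d(1 − 1/q)}u‖_1 · ‖⟨D⟩^{−d/q}u‖_∞. -/

import Mathlib

/-! With `s = d/2 - d/q`, `a = d(1 - 1/q)` and `b = -d/q` one has `a + b = 2s`, so on the Fourier
side `⟨ξ⟩^s 𝓕u · conj (⟨ξ⟩^s 𝓕u) = ⟨ξ⟩^a 𝓕u · conj (⟨ξ⟩^b 𝓕u)`. By Plancherel,
`‖⟨D⟩^s u‖₂² = ∫ ⟪⟨D⟩^a u, ⟨D⟩^b u⟫`, and Hölder's inequality bounds this pairing by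
`‖⟨D⟩^a u‖₁ ‖⟨D⟩^b u‖_∞`. -/

open MeasureTheory Real SchwartzMap FourierTransform
open scoped ENNReal NNReal

theorem enorm_integral_inner_le_eLpNorm_one_mul_eLpNorm_top {α 𝕜 H : Type*} [MeasurableSpace α]
    {μ : Measure α} [RCLike 𝕜] [NormedAddCommGroup H] [InnerProductSpace 𝕜 H] {f : α → H}
    (hf : AEStronglyMeasurable f μ) (g : α → H) :
    ‖∫ x, inner 𝕜 (f x) (g x) ∂μ‖ₑ ≤ eLpNorm f 1 μ * eLpNorm g ⊤ μ :=
  calc ‖∫ x, inner 𝕜 (f x) (g x) ∂μ‖ₑ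
      ≤ eLpNorm (fun x ↦ inner 𝕜 (f x) (g x)) 1 μ := by
        rw [eLpNorm_one_eq_lintegral_enorm]
        exact enorm_integral_le_lintegral_enorm _
    _ ≤ 1 * eLpNorm f 1 μ * eLpNorm g ⊤ μ :=
        eLpNorm_le_eLpNorm_mul_eLpNorm_top 1 hf g (inner 𝕜) 1
          (ae_of_all _ fun x ↦ by simpa using nnnorm_inner_le_nnnorm (𝕜 := 𝕜) (f x) (g x))
    _ = eLpNorm f 1 μ * eLpNorm g ⊤ μ := by simp

namespace SchwartzMap

variable {E H : Type*} [NormedAddCommGroup E] [InnerProductSpace ℝ E] [FiniteDimensional ℝ E]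
  [MeasurableSpace E] [BorelSpace E] [NormedAddCommGroup H] [InnerProductSpace ℂ H]

theorem eLpNorm_two_sq_eq_enorm_integral_inner (f : 𝓢(E, H)) :
    eLpNorm f 2 volume ^ 2 = ‖∫ x, inner ℂ (f x) (f x)‖ₑ :=
  calc eLpNorm f 2 volume ^ 2 = ENNReal.ofReal (‖f.toLp 2‖ ^ 2) := by
        rw [norm_toLp, ENNReal.ofReal_pow ENNReal.toReal_nonneg,
          ENNReal.ofReal_toReal (f.eLpNorm_lt_top (2 : ℝ≥0∞) volume).ne]
    _ = ‖inner ℂ (f.toLp 2) (f.toLp 2)‖ₑ := by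
        rw [inner_self_eq_norm_sq_to_K, ← ofReal_norm, norm_pow, RCLike.norm_ofReal, abs_norm]
    _ = ‖∫ x, inner ℂ (f x) (f x)‖ₑ := by rw [inner_toL2_toL2_eq f f volume]

noncomputable def besselPotential (s : ℝ) : 𝓢(E, H) →L[ℂ] 𝓢(E, H) :=
  fourierMultiplierCLM H (fun ξ : E ↦ (((1 + ‖ξ‖ ^ 2) ^ (s / 2) : ℝ) : ℂ))

theorem besselPotential_apply (s : ℝ) (f : 𝓢(E, H)) (x : E) :
    besselPotential s f x = 𝓕⁻ (fun ξ ↦ (((1 + ‖ξ‖ ^ 2) ^ (s / 2) : ℝ) : ℂ) • 𝓕 ⇑f ξ) x := by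
  rw [besselPotential, fourierMultiplierCLM_apply, fourierInv_coe,
    smulLeftCLM_apply (by fun_prop), fourier_coe]

variable [CompleteSpace H]

theorem fourier_besselPotential_apply (s : ℝ) (f : 𝓢(E, H)) (ξ : E) :
    𝓕 (besselPotential s f) ξ = (((1 + ‖ξ‖ ^ 2) ^ (s / 2) : ℝ) : ℂ) • 𝓕 f ξ := by
  rw [besselPotential, fourierMultiplierCLM_apply, fourier_fourierInv_eq,
    smulLeftCLM_apply_apply (by fun_prop)]

theorem integral_inner_besselPotential_eq {a b s : ℝ} (h : a + b = 2 * s) (f : 𝓢(E, H)) :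
    ∫ x, inner ℂ (besselPotential a f x) (besselPotential b f x) =
      ∫ x, inner ℂ (besselPotential s f x) (besselPotential s f x) := by
  rw [← integral_inner_fourier_fourier (besselPotential a f),
    ← integral_inner_fourier_fourier (besselPotential s f)]
  congr 1 with ξ
  simp only [fourier_besselPotential_apply, inner_smul_left, inner_smul_right,
    Complex.conj_ofReal, ← mul_assoc, ← Complex.ofReal_mul,
    ← Real.rpow_add (by positivity : (0 : ℝ) < 1 + ‖ξ‖ ^ 2)]
  rw [show b / 2 + a / 2 = s / 2 + s / 2 by linarith]

end SchwartzMap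

theorem bessel_l2_interpolation_general
    (d : ℕ) (q : ℝ)
    (u : SchwartzMap (EuclideanSpace ℝ (Fin d)) ℂ) :
    eLpNorm (fun x => 𝓕⁻ (fun ξ =>
        (((1 + ‖ξ‖ ^ 2) ^ ((d / 2 - d / q) / 2) : ℝ) : ℂ) * 𝓕 (⇑u) ξ) x) 2 volume ^ 2 ≤
      eLpNorm (fun x => 𝓕⁻ (fun ξ =>
        (((1 + ‖ξ‖ ^ 2) ^ ((d * (1 - 1 / q)) / 2) : ℝ) : ℂ) * 𝓕 (⇑u) ξ) x) 1 volume *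
      eLpNorm (fun x => 𝓕⁻ (fun ξ =>
        (((1 + ‖ξ‖ ^ 2) ^ ((-(d / q)) / 2) : ℝ) : ℂ) * 𝓕 (⇑u) ξ) x) ⊤ volume := by
  simp only [← smul_eq_mul, ← besselPotential_apply]
  rw [eLpNorm_two_sq_eq_enorm_integral_inner,
    ← integral_inner_besselPotential_eq (a := d * (1 - 1 / q)) (b := -(d / q)) (by ring)]
  exact enorm_integral_inner_le_eLpNorm_one_mul_eLpNorm_top
    (besselPotential _ u).continuous.aestronglyMeasurable _

/-- The Cauchy-Schwarz/Plancherel estimate `‖⟨D⟩^{d/2-d/q}u‖₂² ≤ ‖⟨D⟩^{d/q'}u‖₁ ‖⟨D⟩^{-d/q}u‖_∞`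
(inequality `eq:interpol0`). -/
theorem bessel_l2_interpolation
    (d : ℕ) (hd : 1 ≤ d) (q : ℝ) (hq1 : 1 < q)
    (u : SchwartzMap (EuclideanSpace ℝ (Fin d)) ℂ) :
    eLpNorm (fun x => 𝓕⁻ (fun ξ =>
        (((1 + ‖ξ‖ ^ 2) ^ ((d / 2 - d / q) / 2) : ℝ) : ℂ) * 𝓕 (⇑u) ξ) x) 2 volume ^ 2 ≤
      eLpNorm (fun x => 𝓕⁻ (fun ξ =>
        (((1 + ‖ξ‖ ^ 2) ^ ((d * (1 - 1 / q)) / 2) : ℝ) : ℂ) * 𝓕 (⇑u) ξ) x) 1 volume *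
      eLpNorm (fun x => 𝓕⁻ (fun ξ =>
        (((1 + ‖ξ‖ ^ 2) ^ ((-(d / q)) / 2) : ℝ) : ℂ) * 𝓕 (⇑u) ξ) x) ⊤ volume :=
  bessel_l2_interpolation_general d q u
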